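/- Let A = P⁻¹ Λ P be the Jordan canonical form of A ∈ ℝ^{d×d}, where Λ = blkdiag(J_{k_1}(λ_1), ..., J_{k_s}(λ_s)). If ρ(A) ≤ 1 + c/T for some constant c > 0 and T ≥ 2, then Tr(Γ_T(A) - I) = ∑_{t=1}^T Tr(A^t (A^t)ᵀ) ≤ c₁ e^{2c} (∑_{i=1}^s T^{2k_i - 1}) ‖P‖₂² ‖P⁻¹‖₂² for some absolute constant c₁ > 0. -/

import Mathlib

open Matrix Finset
open scoped Matrix.Norms.L2Operator

/-- The controllability Grammian `Γ_t(A) = ∑_{k=0}^t A^k (A^k)ᵀ`. -/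
noncomputable def Grammian {d : ℕ} (A : Matrix (Fin d) (Fin d) ℝ) (t : ℕ) :
    Matrix (Fin d) (Fin d) ℝ :=
  ∑ k ∈ Finset.range (t + 1), A ^ k * (A ^ k)ᵀ

/-- A `k × k` Jordan block `J_k(λ) = λ I + N` over `ℂ`. -/
def jordanBlock (k : ℕ) (lam : ℂ) : Matrix (Fin k) (Fin k) ℂ :=
  lam • 1 + Matrix.of fun a b : Fin k => if (b : ℕ) = (a : ℕ) + 1 then (1 : ℂ) else 0

noncomputable def frob2 {m n : Type*} [Fintype m] [Fintype n] (M : Matrix m n ℂ) : ℝ :=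
  ∑ i, ∑ j, ‖M i j‖ ^ 2

lemma frob2_nonneg {m n : Type*} [Fintype m] [Fintype n] (M : Matrix m n ℂ) : 0 ≤ frob2 M :=
  Finset.sum_nonneg fun _ _ => Finset.sum_nonneg fun _ _ => sq_nonneg _

lemma frob2_mul_le_left {m n p : Type*} [Fintype m] [Fintype n] [Fintype p]
    [DecidableEq m] [DecidableEq n] [DecidableEq p]
    (X : Matrix m n ℂ) (Y : Matrix n p ℂ) : frob2 (X * Y) ≤ ‖X‖ ^ 2 * frob2 Y := by
  have key : ∀ j : p, ∑ i, ‖(X * Y) i j‖ ^ 2 ≤ ‖X‖ ^ 2 * ∑ l, ‖Y l j‖ ^ 2 := by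
    intro j
    set y : EuclideanSpace ℂ n := WithLp.toLp 2 (fun l => Y l j) with hy
    have h1 : ∑ i, ‖(X * Y) i j‖ ^ 2
        = ‖(EuclideanSpace.equiv m ℂ).symm (X *ᵥ y)‖ ^ 2 := by
      rw [EuclideanSpace.norm_eq, Real.sq_sqrt (by positivity)]
      refine Finset.sum_congr rfl fun i _ => ?_
      simp [Matrix.mul_apply, Matrix.mulVec, dotProduct, hy]
    have h2 : ‖y‖ ^ 2 = ∑ l, ‖Y l j‖ ^ 2 := by
      rw [EuclideanSpace.norm_eq, Real.sq_sqrt (by positivity)]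
    have h3 := X.l2_opNorm_mulVec y
    rw [h1, ← h2, ← mul_pow]
    exact pow_le_pow_left₀ (norm_nonneg _) h3 2
  calc frob2 (X * Y) = ∑ j, ∑ i, ‖(X * Y) i j‖ ^ 2 := Finset.sum_comm
    _ ≤ ∑ j, ‖X‖ ^ 2 * ∑ l, ‖Y l j‖ ^ 2 := Finset.sum_le_sum fun j _ => key j
    _ = ‖X‖ ^ 2 * frob2 Y := by rw [← Finset.mul_sum, frob2, Finset.sum_comm]

lemma frob2_conjTranspose {m n : Type*} [Fintype m] [Fintype n] (M : Matrix m n ℂ) :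
    frob2 Mᴴ = frob2 M := by
  unfold frob2
  rw [Finset.sum_comm]
  simp [Matrix.conjTranspose_apply]

lemma frob2_mul_le_right {m n p : Type*} [Fintype m] [Fintype n] [Fintype p]
    [DecidableEq m] [DecidableEq n] [DecidableEq p]
    (X : Matrix m n ℂ) (Y : Matrix n p ℂ) : frob2 (X * Y) ≤ frob2 X * ‖Y‖ ^ 2 := by
  calc frob2 (X * Y) = frob2 ((X * Y)ᴴ) := (frob2_conjTranspose _).symm
    _ = frob2 (Yᴴ * Xᴴ) := by rw [Matrix.conjTranspose_mul]
    _ ≤ ‖Yᴴ‖ ^ 2 * frob2 Xᴴ := frob2_mul_le_left _ _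
    _ = frob2 X * ‖Y‖ ^ 2 := by
        rw [Matrix.l2_opNorm_conjTranspose, frob2_conjTranspose]; ring

lemma geom_sum_le_two_aux {x : ℝ} (h0 : 0 ≤ x) (h : x ≤ 1 / 2) (n : ℕ) :
    ∑ j ∈ range n, x ^ j ≤ 2 - 2 * x ^ n := by
  induction n with
  | zero => simp
  | succ n ih =>
    rw [geom_sum_succ]
    have hp : 0 ≤ x ^ n := pow_nonneg h0 n
    have hp1 : x ^ (n + 1) = x * x ^ n := by rw [pow_succ, mul_comm]
    nlinarith

lemma geom_sum_le_two {x : ℝ} (h0 : 0 ≤ x) (h : x ≤ 1 / 2) (n : ℕ) :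
    ∑ j ∈ range n, x ^ j ≤ 2 := by
  have := geom_sum_le_two_aux h0 h n
  have hp : 0 ≤ x ^ n := pow_nonneg h0 n
  linarith

lemma geom_sum_le_two_mul {x : ℝ} (h : 2 ≤ x) (m : ℕ) :
    ∑ j ∈ range (m + 1), x ^ j ≤ 2 * x ^ m := by
  induction m with
  | zero => simp
  | succ m ih =>
    rw [Finset.sum_range_succ]
    have hp : 0 ≤ x ^ m := pow_nonneg (by linarith) m
    have : 2 * x ^ m ≤ x ^ (m + 1) := by rw [pow_succ]; nlinarith
    linarith

lemma nilp_pow_apply (k j : ℕ) (a b : Fin k) :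
    (((Matrix.of fun a b : Fin k => if (b : ℕ) = (a : ℕ) + 1 then (1 : ℂ) else 0)) ^ j) a b
      = if (b : ℕ) = (a : ℕ) + j then 1 else 0 := by
  induction j generalizing a b with
  | zero =>
    rw [pow_zero]
    simp [Matrix.one_apply, Fin.ext_iff, eq_comm]
  | succ n ih =>
    rw [pow_succ, Matrix.mul_apply]
    simp only [ih, Matrix.of_apply]
    by_cases hn : (a : ℕ) + n < k
    · set l0 : Fin k := ⟨(a : ℕ) + n, hn⟩ with hl0
      have step : ∀ l : Fin k,
          (if (l : ℕ) = (a : ℕ) + n then (1 : ℂ) else 0) *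
            (if (b : ℕ) = (l : ℕ) + 1 then (1 : ℂ) else 0)
          = if l = l0 then (if (b : ℕ) = (l0 : ℕ) + 1 then (1 : ℂ) else 0) else 0 := by
        intro l
        by_cases hl : l = l0
        · subst hl; simp [hl0]
        · have : ¬ ((l : ℕ) = (a : ℕ) + n) := by
            intro hc; exact hl (Fin.ext hc)
          simp [this, hl]
      rw [Finset.sum_congr rfl fun l _ => step l, Finset.sum_ite_eq']
      simp [hl0, add_assoc]
    · have h1 : ∀ l : Fin k, (l : ℕ) ≠ (a : ℕ) + n := fun l hc => hn (hc ▸ l.isLt)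
      have h2 : ¬ ((b : ℕ) = (a : ℕ) + (n + 1)) := by
        have := b.isLt; omega
      rw [Finset.sum_eq_zero fun l _ => by rw [if_neg (h1 l), zero_mul], if_neg h2]

lemma jordan_pow_apply (k : ℕ) (lam : ℂ) (t : ℕ) (a b : Fin k) :
    (jordanBlock k lam ^ t) a b
      = ∑ m ∈ range (t + 1), (lam ^ m * (t.choose m : ℂ)) *
          (if (b : ℕ) = (a : ℕ) + (t - m) then 1 else 0) := by
  set N : Matrix (Fin k) (Fin k) ℂ :=
    Matrix.of fun a b : Fin k => if (b : ℕ) = (a : ℕ) + 1 then (1 : ℂ) else 0 with hN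
  have hcomm : Commute (lam • (1 : Matrix (Fin k) (Fin k) ℂ)) N :=
    (Commute.one_left N).smul_left lam
  have hpow : jordanBlock k lam ^ t
      = ∑ m ∈ range (t + 1), (lam ^ m * (t.choose m : ℂ)) • N ^ (t - m) := by
    rw [jordanBlock, hcomm.add_pow]
    refine Finset.sum_congr rfl fun m _ => ?_
    rw [smul_pow, one_pow, smul_mul_assoc, one_mul, smul_mul_assoc,
      ← (Nat.cast_commute (t.choose m) (N ^ (t - m))).eq, ← nsmul_eq_mul,
      ← Nat.cast_smul_eq_nsmul ℂ, smul_smul]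
  rw [hpow, Matrix.sum_apply]
  refine Finset.sum_congr rfl fun m _ => ?_
  rw [Matrix.smul_apply, nilp_pow_apply, smul_eq_mul]

lemma jordan_pow_entry_norm_le {k : ℕ} {lam : ℂ} {c : ℝ} {T : ℕ}
    (hc : 0 < c) (hT : 2 ≤ T) (hlam : ‖lam‖ ≤ 1 + c / T)
    {t : ℕ} (ht : t ≤ T) (a b : Fin k) :
    ‖(jordanBlock k lam ^ t) a b‖
      ≤ Real.exp c * (T : ℝ) ^ (b : ℕ) / (T : ℝ) ^ (a : ℕ) := by
  have hT0 : (0 : ℝ) < T := by positivity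
  have hge1 : (1 : ℝ) ≤ 1 + c / T := by
    have : (0:ℝ) < c / T := by positivity
    linarith
  have hexp : (1 + c / T) ^ T ≤ Real.exp c := by
    have h1 : (1 + c / T) ≤ Real.exp (c / T) := by
      have := Real.add_one_le_exp (c / T); linarith
    calc (1 + c / T) ^ T ≤ Real.exp (c / T) ^ T :=
          pow_le_pow_left₀ (by positivity) h1 T
      _ = Real.exp ((T : ℕ) * (c / T)) := (Real.exp_nat_mul _ T).symm
      _ = Real.exp c := by rw [mul_div_cancel₀]; exact ne_of_gt hT0
  have habs : ∀ m : ℕ, m ≤ t → ‖lam‖ ^ m ≤ Real.exp c := by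
    intro m hm
    calc ‖lam‖ ^ m ≤ (1 + c / T) ^ m :=
          pow_le_pow_left₀ (norm_nonneg lam) hlam m
      _ ≤ (1 + c / T) ^ T := pow_le_pow_right₀ hge1 (le_trans hm ht)
      _ ≤ Real.exp c := hexp
  have key : ∀ m ∈ range (t + 1),
      ‖(lam ^ m * (t.choose m : ℂ)) * (if (b : ℕ) = (a : ℕ) + (t - m) then (1:ℂ) else 0)‖
        ≤ (Real.exp c * (T : ℝ) ^ (b : ℕ) / (T : ℝ) ^ (a : ℕ)) *
            (if (b : ℕ) = (a : ℕ) + (t - m) then 1 else 0) := by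
    intro m hm
    have hmt : m ≤ t := by simpa [Nat.lt_succ_iff] using Finset.mem_range.mp hm
    by_cases hcond : (b : ℕ) = (a : ℕ) + (t - m)
    · rw [if_pos hcond, if_pos hcond, mul_one, mul_one, norm_mul, norm_pow]
      have hchoose : (t.choose m : ℝ) ≤ (T : ℝ) ^ (b : ℕ) / (T : ℝ) ^ (a : ℕ) := by
        have h1 : t.choose m = t.choose (t - m) := (Nat.choose_symm hmt).symm
        have h2 : t.choose (t - m) ≤ T ^ (t - m) :=
          le_trans (Nat.choose_le_pow t (t - m)) (Nat.pow_le_pow_left ht _)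
        have h3 : (T : ℝ) ^ (b : ℕ) = (T : ℝ) ^ (a : ℕ) * (T : ℝ) ^ (t - m) := by
          rw [← pow_add, hcond]
        rw [h3, h1, mul_div_cancel_left₀ _ (by positivity : ((T:ℝ) ^ (a:ℕ)) ≠ 0)]
        exact_mod_cast h2
      have hnormpow : ‖lam‖ ^ m ≤ Real.exp c := habs m hmt
      have h4 : (0 : ℝ) ≤ (T : ℝ) ^ (b : ℕ) / (T : ℝ) ^ (a : ℕ) := by positivity
      calc ‖lam‖ ^ m * ‖(t.choose m : ℂ)‖
          = ‖lam‖ ^ m * (t.choose m : ℝ) := by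
            rw [Complex.norm_natCast]
        _ ≤ Real.exp c * ((T : ℝ) ^ (b : ℕ) / (T : ℝ) ^ (a : ℕ)) :=
            mul_le_mul hnormpow hchoose (by positivity) (Real.exp_pos c).le
        _ = Real.exp c * (T : ℝ) ^ (b : ℕ) / (T : ℝ) ^ (a : ℕ) := by ring
    · rw [if_neg hcond, if_neg hcond, mul_zero, mul_zero, norm_zero]
  have hsum_ind : ∑ m ∈ range (t + 1),
      (if (b : ℕ) = (a : ℕ) + (t - m) then (1 : ℝ) else 0) ≤ 1 := by
    have hrefl := Finset.sum_range_reflect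
      (fun j => if (b : ℕ) = (a : ℕ) + j then (1 : ℝ) else 0) (t + 1)
    simp only [Nat.add_sub_cancel] at hrefl
    calc ∑ m ∈ range (t + 1), (if (b : ℕ) = (a : ℕ) + (t - m) then (1 : ℝ) else 0)
        = ∑ j ∈ range (t + 1), (if (b : ℕ) = (a : ℕ) + j then (1 : ℝ) else 0) := by
          exact hrefl
      _ ≤ ∑ j ∈ range (t + 1), (if j = (b : ℕ) - (a : ℕ) then (1 : ℝ) else 0) := by
          refine Finset.sum_le_sum fun j _ => ?_
          by_cases hj : (b : ℕ) = (a : ℕ) + j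
          · rw [if_pos hj, if_pos (by omega)]
          · rw [if_neg hj]; positivity
      _ ≤ 1 := by
          rw [Finset.sum_ite_eq' (range (t + 1)) ((b : ℕ) - (a : ℕ)) (fun _ => (1:ℝ))]
          split <;> norm_num
  have hC : (0 : ℝ) ≤ Real.exp c * (T : ℝ) ^ (b : ℕ) / (T : ℝ) ^ (a : ℕ) := by positivity
  calc ‖(jordanBlock k lam ^ t) a b‖
      = ‖∑ m ∈ range (t + 1), (lam ^ m * (t.choose m : ℂ)) *
          (if (b : ℕ) = (a : ℕ) + (t - m) then (1:ℂ) else 0)‖ := by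
        rw [jordan_pow_apply]
    _ ≤ ∑ m ∈ range (t + 1), ‖(lam ^ m * (t.choose m : ℂ)) *
          (if (b : ℕ) = (a : ℕ) + (t - m) then (1:ℂ) else 0)‖ := norm_sum_le _ _
    _ ≤ ∑ m ∈ range (t + 1), (Real.exp c * (T : ℝ) ^ (b : ℕ) / (T : ℝ) ^ (a : ℕ)) *
          (if (b : ℕ) = (a : ℕ) + (t - m) then 1 else 0) := Finset.sum_le_sum key
    _ = (Real.exp c * (T : ℝ) ^ (b : ℕ) / (T : ℝ) ^ (a : ℕ)) *
          ∑ m ∈ range (t + 1), (if (b : ℕ) = (a : ℕ) + (t - m) then (1:ℝ) else 0) := by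
        rw [Finset.mul_sum]
    _ ≤ (Real.exp c * (T : ℝ) ^ (b : ℕ) / (T : ℝ) ^ (a : ℕ)) * 1 :=
        mul_le_mul_of_nonneg_left hsum_ind hC
    _ = Real.exp c * (T : ℝ) ^ (b : ℕ) / (T : ℝ) ^ (a : ℕ) := mul_one _

lemma jordan_frob2_le {k : ℕ} (hk : 1 ≤ k) {lam : ℂ} {c : ℝ} {T : ℕ}
    (hc : 0 < c) (hT : 2 ≤ T) (hlam : ‖lam‖ ≤ 1 + c / T)
    {t : ℕ} (ht : t ≤ T) :
    frob2 (jordanBlock k lam ^ t) ≤ 4 * Real.exp (2 * c) * ((T : ℝ) ^ 2) ^ (k - 1) := by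
  have hT0 : (0 : ℝ) < T := by positivity
  have hT2 : (2 : ℝ) ≤ (T : ℝ) ^ 2 := by
    have : (2 : ℝ) ≤ (T : ℝ) := by exact_mod_cast hT
    nlinarith
  have hexp2 : Real.exp (2 * c) = Real.exp c ^ 2 := by rw [two_mul, Real.exp_add, sq]
  have hsq : ∀ a b : Fin k,
      (Real.exp c * (T : ℝ) ^ (b : ℕ) / (T : ℝ) ^ (a : ℕ)) ^ 2
        = Real.exp (2 * c) * ((((T : ℝ) ^ 2)⁻¹) ^ (a : ℕ) * ((T : ℝ) ^ 2) ^ (b : ℕ)) := by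
    intro a b
    have e1 : (((T : ℝ) ^ 2)) ^ (b : ℕ) = (T : ℝ) ^ ((b : ℕ) * 2) := by
      rw [← pow_mul, mul_comm]
    have e2 : ((((T : ℝ) ^ 2))⁻¹) ^ (a : ℕ) = ((T : ℝ) ^ ((a : ℕ) * 2))⁻¹ := by
      rw [inv_pow, ← pow_mul, mul_comm 2 (a : ℕ)]
    rw [hexp2, e1, e2, div_pow, mul_pow, ← pow_mul, ← pow_mul, div_eq_mul_inv]
    ring
  have hbound : frob2 (jordanBlock k lam ^ t)
      ≤ ∑ a : Fin k, ∑ b : Fin k,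
          Real.exp (2 * c) * ((((T : ℝ) ^ 2)⁻¹) ^ (a : ℕ) * ((T : ℝ) ^ 2) ^ (b : ℕ)) := by
    refine Finset.sum_le_sum fun a _ => Finset.sum_le_sum fun b _ => ?_
    rw [← hsq a b]
    exact pow_le_pow_left₀ (norm_nonneg _)
      (jordan_pow_entry_norm_le hc hT hlam ht a b) 2
  have hSa : ∑ a : Fin k, ((((T : ℝ) ^ 2)⁻¹) ^ (a : ℕ)) ≤ 2 := by
    rw [Fin.sum_univ_eq_sum_range (fun j => (((T : ℝ) ^ 2)⁻¹) ^ j)]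
    refine geom_sum_le_two (by positivity) ?_ k
    rw [one_div]
    exact inv_anti₀ (by norm_num) hT2
  have hSb : ∑ b : Fin k, (((T : ℝ) ^ 2) ^ (b : ℕ)) ≤ 2 * ((T : ℝ) ^ 2) ^ (k - 1) := by
    obtain ⟨m, rfl⟩ : ∃ m, k = m + 1 := ⟨k - 1, by omega⟩
    rw [Fin.sum_univ_eq_sum_range (fun j => ((T : ℝ) ^ 2) ^ j)]
    simpa using geom_sum_le_two_mul hT2 m
  calc frob2 (jordanBlock k lam ^ t)
      ≤ ∑ a : Fin k, ∑ b : Fin k,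
          Real.exp (2 * c) * ((((T : ℝ) ^ 2)⁻¹) ^ (a : ℕ) * ((T : ℝ) ^ 2) ^ (b : ℕ)) := hbound
    _ = Real.exp (2 * c) * ((∑ a : Fin k, (((T : ℝ) ^ 2)⁻¹) ^ (a : ℕ)) *
          (∑ b : Fin k, ((T : ℝ) ^ 2) ^ (b : ℕ))) := by
        rw [Finset.sum_mul_sum]
        rw [Finset.mul_sum]
        refine Finset.sum_congr rfl fun a _ => ?_
        rw [Finset.mul_sum]
    _ ≤ Real.exp (2 * c) * (2 * (2 * ((T : ℝ) ^ 2) ^ (k - 1))) := by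
        have h1 : (0:ℝ) ≤ ∑ a : Fin k, (((T : ℝ) ^ 2)⁻¹) ^ (a : ℕ) := by positivity
        have h2 : (0:ℝ) ≤ ∑ b : Fin k, ((T : ℝ) ^ 2) ^ (b : ℕ) := by positivity
        have h3 : (0:ℝ) ≤ 2 * ((T : ℝ) ^ 2) ^ (k - 1) := by positivity
        refine mul_le_mul_of_nonneg_left ?_ (Real.exp_pos _).le
        exact mul_le_mul hSa hSb h2 (by norm_num)
    _ = 4 * Real.exp (2 * c) * ((T : ℝ) ^ 2) ^ (k - 1) := by ring

lemma frob2_reindex {m n : Type*} [Fintype m] [Fintype n] (e : m ≃ n)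
    (M : Matrix m m ℂ) : frob2 (Matrix.reindex e e M) = frob2 M := by
  unfold frob2
  simp only [Matrix.reindex_apply, Matrix.submatrix_apply]
  refine Fintype.sum_equiv e.symm _ _ fun i => ?_
  exact Fintype.sum_equiv e.symm _ _ fun j => rfl

lemma frob2_blockDiagonal' {s : ℕ} {k : Fin s → ℕ}
    (M : ∀ i, Matrix (Fin (k i)) (Fin (k i)) ℂ) :
    frob2 (Matrix.blockDiagonal' M) = ∑ i, frob2 (M i) := by
  unfold frob2
  rw [← Finset.univ_sigma_univ, Finset.sum_sigma]
  refine Finset.sum_congr rfl fun i _ => ?_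
  refine Finset.sum_congr rfl fun a _ => ?_
  rw [Finset.sum_sigma]
  rw [Finset.sum_eq_single i]
  · refine Finset.sum_congr rfl fun b _ => by rw [Matrix.blockDiagonal'_apply_eq]
  · intro i' _ hne
    refine Finset.sum_eq_zero fun b _ => ?_
    rw [Matrix.blockDiagonal'_apply_ne M _ _ (Ne.symm hne)]
    simp
  · intro h; exact absurd (Finset.mem_univ i) h

lemma conj_pow_eq {d : ℕ} (P M : Matrix (Fin d) (Fin d) ℂ) (hP : IsUnit P) (t : ℕ) :
    (P⁻¹ * M * P) ^ t = P⁻¹ * M ^ t * P := by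
  have hdet := (Matrix.isUnit_iff_isUnit_det P).mp hP
  have hPP : P * P⁻¹ = 1 := Matrix.mul_nonsing_inv P hdet
  have hPP' : P⁻¹ * P = 1 := Matrix.nonsing_inv_mul P hdet
  induction t with
  | zero => rw [pow_zero, pow_zero, Matrix.mul_one, hPP']
  | succ n ih =>
    have h : P * (P⁻¹ * M * P) = M * P := by
      rw [show P⁻¹ * M * P = P⁻¹ * (M * P) from Matrix.mul_assoc _ _ _,
        ← Matrix.mul_assoc P, hPP, Matrix.one_mul]
    rw [pow_succ, ih, Matrix.mul_assoc (P⁻¹ * M ^ n) P (P⁻¹ * M * P), h,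
      ← Matrix.mul_assoc (P⁻¹ * M ^ n) M P, Matrix.mul_assoc P⁻¹ (M ^ n) M, ← pow_succ]

lemma map_pow_ofReal {d : ℕ} (A : Matrix (Fin d) (Fin d) ℝ) (t : ℕ) :
    (A ^ t).map Complex.ofReal = (A.map Complex.ofReal) ^ t := by
  have h : ∀ B : Matrix (Fin d) (Fin d) ℝ,
      B.map Complex.ofReal = Complex.ofRealHom.mapMatrix B := fun _ => rfl
  rw [h, h, map_pow]

lemma trace_mul_transpose_eq_frob2 {d : ℕ} (M : Matrix (Fin d) (Fin d) ℝ) :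
    Matrix.trace (M * Mᵀ) = frob2 (M.map Complex.ofReal) := by
  unfold frob2
  rw [Matrix.trace]
  refine Finset.sum_congr rfl fun i _ => ?_
  rw [Matrix.diag_apply, Matrix.mul_apply]
  refine Finset.sum_congr rfl fun j _ => ?_
  rw [Matrix.transpose_apply, Matrix.map_apply, Complex.norm_real, Real.norm_eq_abs,
    sq_abs, sq]

/-- If `A = P⁻¹ Λ P` is the Jordan canonical form of `A` with blocks of sizes
`k_1, …, k_s` and `ρ(A) ≤ 1 + c/T` with `T ≥ 2`, then
`Tr(Γ_T(A) - I) ≤ c₁ e^{2c} (∑_i T^{2 k_i - 1}) ‖P‖₂² ‖P⁻¹‖₂²`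
for an absolute constant `c₁ > 0`. -/
theorem grammian_trace_bound_marginally_stable :
    ∃ c₁ : ℝ, 0 < c₁ ∧
      ∀ (d s : ℕ) (k : Fin s → ℕ) (_hk : ∀ i, 1 ≤ k i)
        (A : Matrix (Fin d) (Fin d) ℝ)
        (P : Matrix (Fin d) (Fin d) ℂ) (_hP : IsUnit P)
        (lam : Fin s → ℂ)
        (e : (Σ i : Fin s, Fin (k i)) ≃ Fin d)
        (_hA : A.map Complex.ofReal
          = P⁻¹ * (Matrix.reindex e e (Matrix.blockDiagonal' fun i => jordanBlock (k i) (lam i))) * P)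
        (c : ℝ) (_hc : 0 < c) (T : ℕ) (_hT : 2 ≤ T)
        (_hρ : ∀ i, ‖lam i‖ ≤ 1 + c / T),
        Matrix.trace (Grammian A T - 1)
          ≤ c₁ * Real.exp (2 * c) * (∑ i : Fin s, (T : ℝ) ^ (2 * k i - 1))
              * ‖P‖ ^ 2 * ‖P⁻¹‖ ^ 2 := by
  refine ⟨4, by norm_num, ?_⟩
  intro d s k hk A P hP lam e hA c hc T hT hρ
  -- powers of A via the Jordan form
  have hAt : ∀ t : ℕ, (A ^ t).map Complex.ofReal
      = P⁻¹ * (Matrix.reindex e e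
          (Matrix.blockDiagonal' fun i => jordanBlock (k i) (lam i) ^ t)) * P := by
    intro t
    rw [map_pow_ofReal, hA, conj_pow_eq _ _ hP]
    congr 2
    have h1 : (Matrix.reindex e e (Matrix.blockDiagonal' fun i => jordanBlock (k i) (lam i))) ^ t
        = Matrix.reindex e e ((Matrix.blockDiagonal' fun i => jordanBlock (k i) (lam i)) ^ t) := by
      have := map_pow (Matrix.reindexAlgEquiv ℂ ℂ e)
        (Matrix.blockDiagonal' fun i => jordanBlock (k i) (lam i)) t
      simpa [Matrix.reindexAlgEquiv_apply] using this.symm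
    rw [h1]
    congr 1
    rw [← Matrix.blockDiagonal'_pow]
    rfl
  -- trace identity
  have htr : Matrix.trace (Grammian A T - 1)
      = ∑ t ∈ Finset.Ico 1 (T + 1), frob2 ((A ^ t).map Complex.ofReal) := by
    rw [Grammian, Matrix.trace_sub, Matrix.trace_one, Matrix.trace_sum]
    rw [Finset.sum_congr rfl fun t _ => trace_mul_transpose_eq_frob2 (A ^ t)]
    rw [Finset.range_eq_Ico, Finset.sum_eq_sum_Ico_succ_bot (by omega : 0 < T + 1)]
    have h0 : frob2 ((A ^ 0).map Complex.ofReal) = d := by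
      rw [pow_zero, Matrix.map_one Complex.ofReal Complex.ofReal_zero Complex.ofReal_one]
      unfold frob2
      have : ∀ i : Fin d, ∑ j : Fin d, ‖(1 : Matrix (Fin d) (Fin d) ℂ) i j‖ ^ 2 = 1 := by
        intro i
        rw [Finset.sum_eq_single i]
        · simp [Matrix.one_apply]
        · intro j _ hne; simp [Matrix.one_apply, (Ne.symm hne)]
        · intro h; exact absurd (Finset.mem_univ i) h
      rw [Finset.sum_congr rfl fun i _ => this i]
      simp
    rw [h0]
    simp [Fintype.card_fin]
  -- per-step bound
  have hper : ∀ t ∈ Finset.Ico 1 (T + 1), frob2 ((A ^ t).map Complex.ofReal)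
      ≤ Real.exp (2 * c) * (∑ i : Fin s, 4 * ((T : ℝ) ^ 2) ^ (k i - 1)) * ‖P‖ ^ 2 * ‖P⁻¹‖ ^ 2 := by
    intro t htI
    have ht : t ≤ T := by
      rw [Finset.mem_Ico] at htI; omega
    rw [hAt t]
    have hblock : frob2 (Matrix.reindex e e
          (Matrix.blockDiagonal' fun i => jordanBlock (k i) (lam i) ^ t))
        ≤ ∑ i : Fin s, 4 * Real.exp (2 * c) * ((T : ℝ) ^ 2) ^ (k i - 1) := by
      rw [frob2_reindex, frob2_blockDiagonal']
      exact Finset.sum_le_sum fun i _ =>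
        jordan_frob2_le (hk i) hc hT (hρ i) ht
    calc frob2 (P⁻¹ * (Matrix.reindex e e
            (Matrix.blockDiagonal' fun i => jordanBlock (k i) (lam i) ^ t)) * P)
        ≤ frob2 (P⁻¹ * (Matrix.reindex e e
            (Matrix.blockDiagonal' fun i => jordanBlock (k i) (lam i) ^ t))) * ‖P‖ ^ 2 :=
          frob2_mul_le_right _ _
      _ ≤ (‖P⁻¹‖ ^ 2 * frob2 (Matrix.reindex e e
            (Matrix.blockDiagonal' fun i => jordanBlock (k i) (lam i) ^ t))) * ‖P‖ ^ 2 := by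
          refine mul_le_mul_of_nonneg_right (frob2_mul_le_left _ _) (by positivity)
      _ ≤ (‖P⁻¹‖ ^ 2 * ∑ i : Fin s, 4 * Real.exp (2 * c) * ((T : ℝ) ^ 2) ^ (k i - 1)) * ‖P‖ ^ 2 := by
          refine mul_le_mul_of_nonneg_right
            (mul_le_mul_of_nonneg_left hblock (by positivity)) (by positivity)
      _ = Real.exp (2 * c) * (∑ i : Fin s, 4 * ((T : ℝ) ^ 2) ^ (k i - 1)) * ‖P‖ ^ 2 * ‖P⁻¹‖ ^ 2 := by
          have hsum : ∑ i : Fin s, 4 * Real.exp (2 * c) * ((T : ℝ) ^ 2) ^ (k i - 1)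
              = Real.exp (2 * c) * ∑ i : Fin s, 4 * ((T : ℝ) ^ 2) ^ (k i - 1) := by
            rw [Finset.mul_sum]
            exact Finset.sum_congr rfl fun i _ => by ring
          rw [hsum]
          ring
  have hpow : ∀ i : Fin s, (T : ℝ) * ((T : ℝ) ^ 2) ^ (k i - 1) = (T : ℝ) ^ (2 * k i - 1) := by
    intro i
    have h : 2 * k i - 1 = 2 * (k i - 1) + 1 := by have := hk i; omega
    rw [h, pow_succ (T : ℝ) (2 * (k i - 1)), pow_mul]
    ring
  have hs2 : (T : ℝ) * (∑ i : Fin s, 4 * ((T : ℝ) ^ 2) ^ (k i - 1))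
      = 4 * ∑ i : Fin s, (T : ℝ) ^ (2 * k i - 1) := by
    rw [Finset.mul_sum, Finset.mul_sum]
    refine Finset.sum_congr rfl fun i _ => ?_
    rw [← hpow i]
    ring
  calc Matrix.trace (Grammian A T - 1)
      = ∑ t ∈ Finset.Ico 1 (T + 1), frob2 ((A ^ t).map Complex.ofReal) := htr
    _ ≤ ∑ _t ∈ Finset.Ico 1 (T + 1),
          (Real.exp (2 * c) * (∑ i : Fin s, 4 * ((T : ℝ) ^ 2) ^ (k i - 1))
            * ‖P‖ ^ 2 * ‖P⁻¹‖ ^ 2) := Finset.sum_le_sum hper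
    _ = (T : ℝ) * (Real.exp (2 * c) * (∑ i : Fin s, 4 * ((T : ℝ) ^ 2) ^ (k i - 1))
            * ‖P‖ ^ 2 * ‖P⁻¹‖ ^ 2) := by
        rw [Finset.sum_const, Nat.card_Ico, Nat.add_sub_cancel, nsmul_eq_mul]
    _ = Real.exp (2 * c) * ((T : ℝ) * (∑ i : Fin s, 4 * ((T : ℝ) ^ 2) ^ (k i - 1)))
            * ‖P‖ ^ 2 * ‖P⁻¹‖ ^ 2 := by ring
    _ = 4 * Real.exp (2 * c) * (∑ i : Fin s, (T : ℝ) ^ (2 * k i - 1))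
            * ‖P‖ ^ 2 * ‖P⁻¹‖ ^ 2 := by rw [hs2]; ring
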